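/- For the spherical caps $\omega_r = \{y \in \partial B_1 \subset \mathbb{R}^N : y_1 > -r/2\}$, there exist $\bar r = \bar r(N) > 0$ and $C = C(N) > 0$ such that for all $r \in (0, \bar r)$ the first Dirichlet eigenvalue of the Laplace–Beltrami operator satisfies $N-1 - Cr \leq \lambda_1(\omega_r) \leq N-1$. In particular $\lambda_1(\omega_r) \leq \lambda_1(\omega_0) = N-1$ by domain monotonicity. -/

import Mathlib

open MeasureTheory Metric Real Set Filter Topology intervalIntegral

noncomputable section

/-- First Dirichlet eigenvalue of the Laplace–Beltrami operator on the spherical cap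
`ω_r = {y ∈ ∂B_1 : y₁ > -r/2}`, written in polar-angle (Rayleigh quotient) form with
`θ_r = arccos(-r/2)`. -/
noncomputable def capEig (N : ℕ) (r : ℝ) : ℝ :=
  sInf {q : ℝ | ∃ w : ℝ → ℝ,
    ContDiffOn ℝ 1 w (Set.Icc 0 (Real.arccos (-r / 2))) ∧
    w (Real.arccos (-r / 2)) = 0 ∧
    (0 < ∫ θ in (0:ℝ)..Real.arccos (-r / 2), Real.sin θ ^ (N - 2) * (w θ) ^ 2) ∧
    q = (∫ θ in (0:ℝ)..Real.arccos (-r / 2), Real.sin θ ^ (N - 2) * (deriv w θ) ^ 2) /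
        (∫ θ in (0:ℝ)..Real.arccos (-r / 2), Real.sin θ ^ (N - 2) * (w θ) ^ 2)}

/-!
With `k = N - 2` and `T = arccos (-r/2) ∈ [π/2, π/2 + πr/4]`, the upper bound comes from the test
function `cos θ - cos T`, whose Rayleigh quotient one integration by parts bounds by `k + 1`.
For the lower bound, Picone's identity with the hemisphere ground state `cos θ` gives the Hardy-type
inequality `(k + 1) ∫₀^{π/2} sin^k w² ≤ ∫₀^{π/2} sin^k w'²` for `w (π/2) = 0`. Rescaling the cap
onto the hemisphere by `θ = c s` with `c = 2T/π ≤ 1 + r/2` changes the weight `sin^k` by a factor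
between `(2 - c)^k` and `c^k`, which costs only `O(r)` in the constant.
-/

theorem integral_sin_pow_mul_sq_nonneg (k : ℕ) (f : ℝ → ℝ) {T : ℝ} (h0 : 0 ≤ T) (hT : T ≤ π) :
    0 ≤ ∫ θ in 0..T, sin θ ^ k * f θ ^ 2 :=
  intervalIntegral.integral_nonneg h0 fun _ hθ =>
    mul_nonneg (pow_nonneg (sin_nonneg_of_nonneg_of_le_pi hθ.1 (hθ.2.trans hT)) _) (sq_nonneg _)

-- Picone's boundary term `ρ w² φ'/φ` for the weight `ρ = sin^k` and the hemisphere ground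
-- state `φ = cos`.
def piconeTerm (k : ℕ) (w : ℝ → ℝ) (θ : ℝ) : ℝ :=
  -(sin θ ^ (k + 1) * w θ ^ 2) / cos θ

theorem hasDerivAt_piconeTerm (k : ℕ) {w : ℝ → ℝ} {g θ : ℝ} (hw : HasDerivAt w g θ)
    (hθ : cos θ ≠ 0) :
    HasDerivAt (piconeTerm k w)
      (sin θ ^ k * g ^ 2 - (k + 1) * (sin θ ^ k * w θ ^ 2)
        - sin θ ^ k * ((g * cos θ + w θ * sin θ) / cos θ) ^ 2) θ := by
  have h := (((hasDerivAt_sin θ).fun_pow (k + 1)).fun_mul (hw.fun_pow 2)).fun_neg.fun_div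
    (hasDerivAt_cos θ) hθ
  refine HasDerivAt.congr_deriv (f := piconeTerm k w) h ?_
  simp only [Nat.add_sub_cancel, Nat.cast_add, Nat.cast_one, Nat.cast_ofNat]
  field_simp
  ring

theorem piconeTerm_le_integral (k : ℕ) {w g : ℝ → ℝ} {b : ℝ} (hb0 : 0 ≤ b) (hb : b < π / 2)
    (hw : ContinuousOn w (Icc 0 b)) (hg : ContinuousOn g (Icc 0 b))
    (hd : ∀ θ ∈ Ioo 0 b, HasDerivAt w (g θ) θ) :
    piconeTerm k w b ≤ ∫ θ in 0..b, (sin θ ^ k * g θ ^ 2 - (k + 1) * (sin θ ^ k * w θ ^ 2)) := by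
  have hcos : ∀ θ ∈ Icc 0 b, 0 < cos θ := fun θ hθ =>
    cos_pos_of_mem_Ioo ⟨by linarith [hθ.1, pi_pos], hθ.2.trans_lt hb⟩
  have hcont : ContinuousOn (piconeTerm k w) (Icc 0 b) :=
    ((continuous_sin.continuousOn.pow _).mul (hw.pow 2)).neg.div continuous_cos.continuousOn
      fun θ hθ => (hcos θ hθ).ne'
  have hint : IntegrableOn (fun θ => sin θ ^ k * g θ ^ 2 - (k + 1) * (sin θ ^ k * w θ ^ 2))
      (Icc 0 b) :=
    (((continuous_sin.continuousOn.pow _).mul (hg.pow 2)).sub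
      (continuousOn_const.mul ((continuous_sin.continuousOn.pow _).mul (hw.pow 2)))).integrableOn_Icc
  have h := sub_le_integral_of_hasDeriv_right_of_le hb0 hcont
    (fun θ hθ => (hasDerivAt_piconeTerm k (hd θ hθ)
      (hcos θ (Ioo_subset_Icc_self hθ)).ne').hasDerivWithinAt) hint
    (fun θ hθ => sub_le_self _ (mul_nonneg (pow_nonneg (sin_nonneg_of_nonneg_of_le_pi hθ.1.le
      (by linarith [hθ.2, pi_pos])) _) (sq_nonneg _)))
  simpa [piconeTerm] using h

theorem neg_le_piconeTerm (k : ℕ) {w g : ℝ → ℝ} {b M : ℝ} (hb0 : 0 ≤ b) (hb : b < π / 2)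
    (hw : ContinuousOn w (Icc b (π / 2))) (hd : ∀ θ ∈ Ico b (π / 2), HasDerivAt w (g θ) θ)
    (hM : ∀ θ ∈ Ico b (π / 2), ‖g θ‖ ≤ M) (h0 : w (π / 2) = 0) :
    -(π / 2 * M ^ 2 * (π / 2 - b)) ≤ piconeTerm k w b := by
  have hwb : |w b| ≤ M * (π / 2 - b) := by
    simpa [h0] using norm_image_sub_le_of_norm_deriv_right_le_segment hw
      (fun θ hθ => (hd θ hθ).hasDerivWithinAt) hM (π / 2) ⟨hb.le, le_rfl⟩
  -- `cos` vanishes only linearly at `π/2`, while `w²` vanishes quadratically.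
  have hcos : 2 / π * (π / 2 - b) ≤ cos b := by
    simpa [sin_pi_div_two_sub] using mul_le_sin (x := π / 2 - b) (by linarith) (by linarith)
  have hcos_pos : 0 < cos b := cos_pos_of_mem_Ioo ⟨by linarith [pi_pos], hb⟩
  have hsin : sin b ^ (k + 1) ≤ 1 := pow_le_one₀ (sin_nonneg_of_nonneg_of_le_pi hb0
    (by linarith [pi_pos])) (sin_le_one b)
  rw [piconeTerm, neg_div, neg_le_neg_iff, div_le_iff₀ hcos_pos]
  calc sin b ^ (k + 1) * w b ^ 2 ≤ w b ^ 2 := mul_le_of_le_one_left (sq_nonneg _) hsin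
    _ = |w b| ^ 2 := (sq_abs _).symm
    _ ≤ (M * (π / 2 - b)) ^ 2 := by gcongr
    _ = π / 2 * M ^ 2 * (π / 2 - b) * (2 / π * (π / 2 - b)) := by field_simp
    _ ≤ π / 2 * M ^ 2 * (π / 2 - b) * cos b := by gcongr

theorem hardy_hemisphere (k : ℕ) {w g : ℝ → ℝ} (hw : ContinuousOn w (Icc 0 (π / 2)))
    (hg : ContinuousOn g (Icc 0 (π / 2))) (hd : ∀ θ ∈ Ioo 0 (π / 2), HasDerivAt w (g θ) θ)
    (h0 : w (π / 2) = 0) :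
    (k + 1) * ∫ θ in 0..π / 2, sin θ ^ k * w θ ^ 2 ≤ ∫ θ in 0..π / 2, sin θ ^ k * g θ ^ 2 := by
  set H : ℝ → ℝ := fun θ => sin θ ^ k * g θ ^ 2 - (k + 1) * (sin θ ^ k * w θ ^ 2)
  have hwk : ContinuousOn (fun θ => sin θ ^ k * w θ ^ 2) (Icc 0 (π / 2)) :=
    (continuous_sin.continuousOn.pow _).mul (hw.pow 2)
  have hgk : ContinuousOn (fun θ => sin θ ^ k * g θ ^ 2) (Icc 0 (π / 2)) :=
    (continuous_sin.continuousOn.pow _).mul (hg.pow 2)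
  have hH : ContinuousOn H (Icc 0 (π / 2)) := hgk.sub (continuousOn_const.mul hwk)
  obtain ⟨M, hM⟩ := isCompact_Icc.exists_bound_of_continuousOn hg
  have hprim : Tendsto (fun b => ∫ θ in 0..b, H θ) (𝓝[Ioo 0 (π / 2)] (π / 2))
      (𝓝 (∫ θ in 0..π / 2, H θ)) := by
    have h := continuousOn_primitive_interval (μ := volume) (a := 0) (b := π / 2)
      (by rw [uIcc_of_le pi_div_two_pos.le]; exact hH.integrableOn_Icc)
    rw [uIcc_of_le pi_div_two_pos.le] at h
    exact ((h _ ⟨pi_div_two_pos.le, le_rfl⟩).mono Ioo_subset_Icc_self).tendsto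
  have hlin : Tendsto (fun b => π / 2 * M ^ 2 * (π / 2 - b)) (𝓝[Ioo 0 (π / 2)] (π / 2))
      (𝓝 0) := by
    have h : Continuous fun b : ℝ => π / 2 * M ^ 2 * (π / 2 - b) := by fun_prop
    simpa using (h.tendsto (π / 2)).mono_left nhdsWithin_le_nhds
  -- `piconeTerm` is singular at `π/2`: integrate up to `b < π/2` and let `b → π/2`.
  have hH_nonneg : 0 ≤ ∫ θ in 0..π / 2, H θ := by
    have := right_nhdsWithin_Ioo_neBot pi_div_two_pos
    refine ge_of_tendsto (by simpa using hprim.add hlin) ?_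
    filter_upwards [self_mem_nhdsWithin] with b hb
    have hlow := neg_le_piconeTerm k hb.1.le hb.2 (hw.mono (Icc_subset_Icc hb.1.le le_rfl))
      (fun θ hθ => hd θ ⟨hb.1.trans_le hθ.1, hθ.2⟩)
      (fun θ hθ => hM θ ⟨hb.1.le.trans hθ.1, hθ.2.le⟩) h0
    have hup := piconeTerm_le_integral k hb.1.le hb.2
      (hw.mono (Icc_subset_Icc le_rfl hb.2.le)) (hg.mono (Icc_subset_Icc le_rfl hb.2.le))
      (fun θ hθ => hd θ ⟨hθ.1, hθ.2.trans hb.2⟩)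
    linarith
  have hsplit : ∫ θ in 0..π / 2, H θ = (∫ θ in 0..π / 2, sin θ ^ k * g θ ^ 2)
      - (k + 1) * ∫ θ in 0..π / 2, sin θ ^ k * w θ ^ 2 := by
    simp only [H]
    rw [intervalIntegral.integral_sub (hgk.intervalIntegrable_of_Icc pi_div_two_pos.le)
      ((hwk.intervalIntegrable_of_Icc pi_div_two_pos.le).const_mul _),
      intervalIntegral.integral_const_mul]
  linarith

theorem sin_mul_le_mul_sin {c s : ℝ} (hc : 1 ≤ c) (hs : 0 ≤ s) (hcs : c * s ≤ π) :
    sin (c * s) ≤ c * sin s := by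
  have hc0 : 0 < c := by linarith
  have h := strictConcaveOn_sin_Icc.concaveOn.2 ⟨mul_nonneg hc0.le hs, hcs⟩
    ⟨le_rfl, pi_pos.le⟩ (inv_nonneg.2 hc0.le) (sub_nonneg.2 (inv_le_one_of_one_le₀ hc))
    (add_sub_cancel _ 1)
  simp only [smul_eq_mul, mul_zero, add_zero, sin_zero, inv_mul_cancel_left₀ hc0.ne'] at h
  rwa [inv_mul_le_iff₀ hc0] at h

theorem two_sub_mul_sin_le_sin_mul {c s : ℝ} (hc1 : 1 ≤ c) (hc2 : c ≤ 3 / 2)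
    (hs : s ∈ Icc 0 (π / 2)) : (2 - c) * sin s ≤ sin (c * s) := by
  set x := (c - 1) * s
  have hx0 : 0 ≤ x := mul_nonneg (by linarith) hs.1
  have hx : x ≤ (c - 1) * (π / 2) := mul_le_mul_of_nonneg_left hs.2 (by linarith)
  have hsin : 0 ≤ sin s := sin_nonneg_of_nonneg_of_le_pi hs.1 (by linarith [hs.2, pi_pos])
  have hcos : 0 ≤ cos s := cos_nonneg_of_mem_Icc ⟨by linarith [hs.1, pi_pos], hs.2⟩
  have hsinx : 0 ≤ sin x := sin_nonneg_of_nonneg_of_le_pi hx0 (by nlinarith [pi_pos])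
  have hx1 : x ≤ 1 := hx.trans (by nlinarith [pi_lt_d2])
  have hcosx : 2 - c ≤ cos x := by
    nlinarith [one_sub_sq_div_two_le_cos (x := x), mul_le_mul_of_nonneg_left pi_le_four
      (by linarith : (0 : ℝ) ≤ c - 1)]
  calc (2 - c) * sin s ≤ sin s * cos x := by nlinarith
    _ ≤ sin s * cos x + cos s * sin x := le_add_of_nonneg_right (mul_nonneg hcos hsinx)
    _ = sin (c * s) := by rw [← sin_add]; congr 1; ring

theorem one_sub_mul_mul_one_add_pow_le (k : ℕ) {δ : ℝ} (h0 : 0 ≤ δ) (h1 : δ ≤ 1) :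
    (1 - 2 * (k + 1) * δ) * (1 + δ) ^ (k + 2) ≤ (1 - δ) ^ k := by
  have hbernoulli : 1 - 2 * (k + 1) * δ ≤ (1 - δ) ^ (2 * k + 2) := by
    have h := one_add_mul_le_pow (a := -δ) (by linarith) (2 * k + 2)
    rw [← sub_eq_add_neg] at h
    push_cast at h
    linarith
  have hprod : ((1 - δ) * (1 + δ)) ^ (k + 2) ≤ 1 := pow_le_one₀ (by nlinarith) (by nlinarith)
  calc (1 - 2 * (k + 1) * δ) * (1 + δ) ^ (k + 2)
      ≤ (1 - δ) ^ (2 * k + 2) * (1 + δ) ^ (k + 2) := by gcongr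
    _ = (1 - δ) ^ k * ((1 - δ) * (1 + δ)) ^ (k + 2) := by
      rw [mul_pow, ← mul_assoc, ← pow_add, show k + (k + 2) = 2 * k + 2 by ring]
    _ ≤ (1 - δ) ^ k := mul_le_of_le_one_right (pow_nonneg (by linarith) _) hprod

theorem integral_pow_mul_sq_le_of_le (k : ℕ) {a b : ℝ} (hab : a ≤ b) {u v f : ℝ → ℝ}
    (hu : ContinuousOn u (Icc a b)) (hv : ContinuousOn v (Icc a b))
    (hf : ContinuousOn f (Icc a b)) (huv : ∀ x ∈ Icc a b, 0 ≤ u x ∧ u x ≤ v x) :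
    ∫ x in a..b, u x ^ k * f x ^ 2 ≤ ∫ x in a..b, v x ^ k * f x ^ 2 :=
  intervalIntegral.integral_mono_on hab (((hu.pow k).mul (hf.pow 2)).intervalIntegrable_of_Icc hab)
    (((hv.pow k).mul (hf.pow 2)).intervalIntegrable_of_Icc hab) fun x hx => by
      gcongr
      exacts [(huv x hx).1, (huv x hx).2]

theorem hardy_hemisphere_comp_mul (k : ℕ) {c : ℝ} (hc : 0 < c) {w g : ℝ → ℝ}
    (hw : ContinuousOn w (Icc 0 (c * (π / 2)))) (hg : ContinuousOn g (Icc 0 (c * (π / 2))))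
    (hd : ∀ θ ∈ Ioo 0 (c * (π / 2)), HasDerivAt w (g θ) θ) (h0 : w (c * (π / 2)) = 0) :
    (k + 1) * ∫ s in 0..π / 2, sin s ^ k * w (c * s) ^ 2
      ≤ c ^ 2 * ∫ s in 0..π / 2, sin s ^ k * g (c * s) ^ 2 := by
  have hmaps : MapsTo (c * ·) (Icc 0 (π / 2)) (Icc 0 (c * (π / 2))) := fun s hs =>
    ⟨mul_nonneg hc.le hs.1, mul_le_mul_of_nonneg_left hs.2 hc.le⟩
  have hardy := hardy_hemisphere k (g := fun s => c * g (c * s))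
    (hw.comp (continuous_const_mul c).continuousOn hmaps)
    (continuousOn_const.mul (hg.comp (continuous_const_mul c).continuousOn hmaps))
    (fun s hs => by
      simpa [Function.comp_def, mul_comm] using
        (hd (c * s) ⟨mul_pos hc hs.1, mul_lt_mul_of_pos_left hs.2 hc⟩).comp s
          ((hasDerivAt_id s).const_mul c))
    h0
  refine hardy.trans_eq ?_
  rw [← intervalIntegral.integral_const_mul]
  congr 1 with s
  ring

theorem hardy_rescaled (k : ℕ) {c α β : ℝ} (hc : 0 < c) (hα : 0 ≤ α)
    (hsin : ∀ s ∈ Icc 0 (π / 2), α * sin s ≤ sin (c * s) ∧ sin (c * s) ≤ β * sin s)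
    {w g : ℝ → ℝ} (hw : ContinuousOn w (Icc 0 (c * (π / 2))))
    (hg : ContinuousOn g (Icc 0 (c * (π / 2))))
    (hd : ∀ θ ∈ Ioo 0 (c * (π / 2)), HasDerivAt w (g θ) θ) (h0 : w (c * (π / 2)) = 0) :
    (k + 1) * α ^ k * ∫ θ in 0..c * (π / 2), sin θ ^ k * w θ ^ 2
      ≤ c ^ 2 * β ^ k * ∫ θ in 0..c * (π / 2), sin θ ^ k * g θ ^ 2 := by
  have hsub : ∀ f : ℝ → ℝ, ∫ θ in 0..c * (π / 2), f θ = c * ∫ s in 0..π / 2, f (c * s) := by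
    simp [hc.ne']
  have hconst_mul : ∀ (γ : ℝ) (f : ℝ → ℝ),
      ∫ s in 0..π / 2, (γ * sin s) ^ k * f s ^ 2 = γ ^ k * ∫ s in 0..π / 2, sin s ^ k * f s ^ 2 := by
    intro γ f
    rw [← intervalIntegral.integral_const_mul]
    congr 1 with s
    ring
  have hmaps : MapsTo (c * ·) (Icc 0 (π / 2)) (Icc 0 (c * (π / 2))) := fun s hs =>
    ⟨mul_nonneg hc.le hs.1, mul_le_mul_of_nonneg_left hs.2 hc.le⟩
  have hαsin_nonneg : ∀ s ∈ Icc 0 (π / 2), 0 ≤ α * sin s := fun s hs =>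
    mul_nonneg hα (sin_nonneg_of_nonneg_of_le_pi hs.1 (by linarith [hs.2, pi_pos]))
  have hβk : 0 ≤ β ^ k := pow_nonneg (hα.trans (by
    simpa using (hsin (π / 2) ⟨pi_div_two_pos.le, le_rfl⟩).1.trans
      (hsin (π / 2) ⟨pi_div_two_pos.le, le_rfl⟩).2)) k
  have hW_cmp := integral_pow_mul_sq_le_of_le k (f := fun s => w (c * s)) pi_div_two_pos.le
    (by fun_prop) (by fun_prop)
    (hw.comp (continuous_const_mul c).continuousOn hmaps)
    fun s hs => ⟨(hαsin_nonneg s hs).trans (hsin s hs).1, (hsin s hs).2⟩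
  have hG_cmp := integral_pow_mul_sq_le_of_le k (f := fun s => g (c * s)) pi_div_two_pos.le
    (by fun_prop) (by fun_prop)
    (hg.comp (continuous_const_mul c).continuousOn hmaps)
    fun s hs => ⟨hαsin_nonneg s hs, (hsin s hs).1⟩
  rw [hconst_mul] at hW_cmp hG_cmp
  have hardy := hardy_hemisphere_comp_mul k hc hw hg hd h0
  rw [hsub (fun θ => sin θ ^ k * w θ ^ 2), hsub (fun θ => sin θ ^ k * g θ ^ 2)]
  calc (k + 1) * α ^ k * (c * ∫ s in 0..π / 2, sin (c * s) ^ k * w (c * s) ^ 2)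
      ≤ (k + 1) * α ^ k * (c * (β ^ k * ∫ s in 0..π / 2, sin s ^ k * w (c * s) ^ 2)) := by
        gcongr
    _ = c * α ^ k * β ^ k * ((k + 1) * ∫ s in 0..π / 2, sin s ^ k * w (c * s) ^ 2) := by ring
    _ ≤ c * α ^ k * β ^ k * (c ^ 2 * ∫ s in 0..π / 2, sin s ^ k * g (c * s) ^ 2) := by gcongr
    _ = c ^ 3 * β ^ k * (α ^ k * ∫ s in 0..π / 2, sin s ^ k * g (c * s) ^ 2) := by ring
    _ ≤ c ^ 3 * β ^ k * ∫ s in 0..π / 2, sin (c * s) ^ k * g (c * s) ^ 2 := by gcongr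
    _ = c ^ 2 * β ^ k * (c * ∫ s in 0..π / 2, sin (c * s) ^ k * g (c * s) ^ 2) := by ring

theorem hardy_cap (k : ℕ) {c : ℝ} (hc1 : 1 ≤ c) (hc2 : c ≤ 3 / 2) {w g : ℝ → ℝ}
    (hw : ContinuousOn w (Icc 0 (c * (π / 2)))) (hg : ContinuousOn g (Icc 0 (c * (π / 2))))
    (hd : ∀ θ ∈ Ioo 0 (c * (π / 2)), HasDerivAt w (g θ) θ) (h0 : w (c * (π / 2)) = 0) :
    ((k + 1) - 2 * (k + 1) ^ 2 * (c - 1)) * ∫ θ in 0..c * (π / 2), sin θ ^ k * w θ ^ 2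
      ≤ ∫ θ in 0..c * (π / 2), sin θ ^ k * g θ ^ 2 := by
  have hc0 : 0 < c := by linarith
  have hsin : ∀ s ∈ Icc 0 (π / 2), (2 - c) * sin s ≤ sin (c * s) ∧ sin (c * s) ≤ c * sin s :=
    fun s hs => ⟨two_sub_mul_sin_le_sin_mul hc1 hc2 hs,
      sin_mul_le_mul_sin hc1 hs.1 (by nlinarith [hs.2, pi_pos])⟩
  have h := hardy_rescaled k hc0 (by linarith) hsin hw hg hd h0
  have hD := integral_sin_pow_mul_sq_nonneg k w (T := c * (π / 2)) (by positivity)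
    (by nlinarith [pi_pos])
  have hconst := one_sub_mul_mul_one_add_pow_le k (δ := c - 1) (by linarith) (by linarith)
  rw [show 1 + (c - 1) = c by ring, show 1 - (c - 1) = 2 - c by ring] at hconst
  refine le_of_mul_le_mul_left ?_ (by positivity : 0 < c ^ (k + 2))
  calc c ^ (k + 2) * (((k + 1) - 2 * (k + 1) ^ 2 * (c - 1))
        * ∫ θ in 0..c * (π / 2), sin θ ^ k * w θ ^ 2)
      = (k + 1) * ((1 - 2 * (k + 1) * (c - 1)) * c ^ (k + 2))
        * ∫ θ in 0..c * (π / 2), sin θ ^ k * w θ ^ 2 := by ring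
    _ ≤ (k + 1) * (2 - c) ^ k * ∫ θ in 0..c * (π / 2), sin θ ^ k * w θ ^ 2 := by gcongr
    _ ≤ c ^ 2 * c ^ k * ∫ θ in 0..c * (π / 2), sin θ ^ k * g θ ^ 2 := h
    _ = c ^ (k + 2) * ∫ θ in 0..c * (π / 2), sin θ ^ k * g θ ^ 2 := by ring

theorem arccos_neg_div_two_div_mem {r : ℝ} (h0 : 0 ≤ r) (h2 : r ≤ 2) :
    arccos (-r / 2) / (π / 2) ∈ Icc 1 (1 + r / 2) := by
  have harccos : arccos (-r / 2) = π / 2 + arcsin (r / 2) := by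
    rw [neg_div, arccos_neg, arccos_eq_pi_div_two_sub_arcsin]
    ring
  have harcsin0 : 0 ≤ arcsin (r / 2) := arcsin_nonneg.2 (by linarith)
  have harcsin : 2 / π * arcsin (r / 2) ≤ r / 2 := by
    simpa [sin_arcsin (by linarith : (-1 : ℝ) ≤ r / 2) (by linarith)] using
      mul_le_sin harcsin0 (arcsin_le_pi_div_two _)
  rw [harccos, mem_Icc, le_div_iff₀ pi_div_two_pos, div_le_iff₀ pi_div_two_pos]
  constructor
  · linarith
  · rw [div_mul_eq_mul_div, div_le_iff₀ pi_pos] at harcsin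
    nlinarith

def rayleighQuotients (k : ℕ) (T : ℝ) : Set ℝ :=
  {q : ℝ | ∃ w : ℝ → ℝ, ContDiffOn ℝ 1 w (Icc 0 T) ∧ w T = 0 ∧
    (0 < ∫ θ in (0:ℝ)..T, sin θ ^ k * w θ ^ 2) ∧
    q = (∫ θ in (0:ℝ)..T, sin θ ^ k * deriv w θ ^ 2) / ∫ θ in (0:ℝ)..T, sin θ ^ k * w θ ^ 2}

theorem capEig_eq_sInf (N : ℕ) (r : ℝ) :
    capEig N r = sInf (rayleighQuotients (N - 2) (arccos (-r / 2))) := rfl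

theorem le_of_mem_rayleighQuotients {k : ℕ} {T μ q : ℝ} (hT : 0 < T)
    (hμ : ∀ w g : ℝ → ℝ, ContinuousOn w (Icc 0 T) → ContinuousOn g (Icc 0 T) →
      (∀ θ ∈ Ioo 0 T, HasDerivAt w (g θ) θ) → w T = 0 →
      μ * ∫ θ in 0..T, sin θ ^ k * w θ ^ 2 ≤ ∫ θ in 0..T, sin θ ^ k * g θ ^ 2)
    (hq : q ∈ rayleighQuotients k T) : μ ≤ q := by
  obtain ⟨w, hw, hwT, hpos, rfl⟩ := hq
  set g := derivWithin w (Icc 0 T)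
  have hg_eq : ∀ θ ∈ Ioo 0 T, g θ = deriv w θ := fun θ hθ =>
    derivWithin_of_mem_nhds (Icc_mem_nhds hθ.1 hθ.2)
  have hd : ∀ θ ∈ Ioo 0 T, HasDerivAt w (g θ) θ := fun θ hθ => by
    rw [hg_eq θ hθ]
    exact ((hw.differentiableOn one_ne_zero θ (Ioo_subset_Icc_self hθ)).differentiableAt
      (Icc_mem_nhds hθ.1 hθ.2)).hasDerivAt
  have hint : ∫ θ in 0..T, sin θ ^ k * g θ ^ 2 = ∫ θ in 0..T, sin θ ^ k * deriv w θ ^ 2 := by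
    rw [intervalIntegral.integral_of_le hT.le, intervalIntegral.integral_of_le hT.le,
      integral_Ioc_eq_integral_Ioo, integral_Ioc_eq_integral_Ioo]
    exact setIntegral_congr_fun measurableSet_Ioo fun θ hθ => by simp only [hg_eq θ hθ]
  rw [le_div_iff₀ hpos, ← hint]
  exact hμ w g hw.continuousOn (hw.continuousOn_derivWithin (uniqueDiffOn_Icc hT) le_rfl) hd hwT

theorem le_of_mem_rayleighQuotients_cap (k : ℕ) {r q : ℝ} (h0 : 0 ≤ r) (h1 : r ≤ 1)
    (hq : q ∈ rayleighQuotients k (arccos (-r / 2))) : (k + 1) - (k + 1) ^ 2 * r ≤ q := by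
  obtain ⟨hc1, hcr⟩ := arccos_neg_div_two_div_mem h0 (by linarith)
  set c := arccos (-r / 2) / (π / 2)
  have hT : arccos (-r / 2) = c * (π / 2) := (div_mul_cancel₀ _ pi_div_two_pos.ne').symm
  rw [hT] at hq
  refine le_of_mem_rayleighQuotients (by positivity) (fun w g hw hg hd hwT => ?_) hq
  have hμ : (k + 1) - (k + 1) ^ 2 * r ≤ (k + 1) - 2 * (k + 1) ^ 2 * (c - 1) := by
    nlinarith [sq_nonneg ((k : ℝ) + 1)]
  exact (mul_le_mul_of_nonneg_right hμ (integral_sin_pow_mul_sq_nonneg k w (by positivity)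
    (hT ▸ arccos_le_pi _))).trans (hardy_cap k hc1 (by linarith) hw hg hd hwT)

theorem integral_sin_pow_mul_cos_sub_sq_pos (k : ℕ) {T : ℝ} (hT0 : 0 < T) (hT : T ≤ π) :
    0 < ∫ θ in 0..T, sin θ ^ k * (cos θ - cos T) ^ 2 :=
  intervalIntegral.intervalIntegral_pos_of_pos_on (Continuous.intervalIntegrable (by fun_prop) _ _)
    (fun θ hθ => mul_pos (pow_pos (sin_pos_of_pos_of_lt_pi hθ.1 (hθ.2.trans_le hT)) _)
      (pow_pos (sub_pos.2 (strictAntiOn_cos ⟨hθ.1.le, hθ.2.le.trans hT⟩ ⟨hT0.le, hT⟩ hθ.2)) _))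
    hT0

theorem integral_sin_pow_mul_sin_sq_le (k : ℕ) {T : ℝ} (hT1 : π / 2 ≤ T) (hT2 : T ≤ π) :
    ∫ θ in 0..T, sin θ ^ k * sin θ ^ 2
      ≤ (k + 1) * ∫ θ in 0..T, sin θ ^ k * (cos θ - cos T) ^ 2 := by
  set a := cos T
  have ha : a ≤ 0 := cos_nonpos_of_pi_div_two_le_of_le hT1 (by linarith)
  have hT0 : 0 ≤ T := by linarith [pi_pos]
  -- `sin^(k+1) (cos - 2a)` is an antiderivative of the integrand up to `(k+1) a² sin^k ≥ 0`.
  have hG : ∀ θ, HasDerivAt (fun θ => sin θ ^ (k + 1) * (cos θ - 2 * a))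
      ((k + 1) * sin θ ^ k * cos θ * (cos θ - 2 * a) - sin θ ^ k * sin θ ^ 2) θ := fun θ => by
    have h := ((hasDerivAt_sin θ).fun_pow (k + 1)).fun_mul ((hasDerivAt_cos θ).sub_const (2 * a))
    refine h.congr_deriv ?_
    push_cast
    ring
  have h := sub_le_integral_of_hasDeriv_right_of_le
    (φ := fun θ => (k + 1) * (sin θ ^ k * (cos θ - a) ^ 2) - sin θ ^ k * sin θ ^ 2) hT0
    (Continuous.continuousOn (by fun_prop)) (fun θ _ => (hG θ).hasDerivWithinAt)
    (Continuous.integrableOn_Icc (by fun_prop)) fun θ hθ => by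
      have hs : 0 ≤ sin θ ^ k :=
        pow_nonneg (sin_nonneg_of_nonneg_of_le_pi hθ.1.le (hθ.2.le.trans hT2)) _
      nlinarith [mul_nonneg hs (sq_nonneg a)]
  have hsinT : 0 ≤ sin T ^ (k + 1) := pow_nonneg (sin_nonneg_of_nonneg_of_le_pi hT0 hT2) _
  rw [intervalIntegral.integral_sub ((Continuous.intervalIntegrable (by fun_prop) _ _).const_mul _)
    (Continuous.intervalIntegrable (by fun_prop) _ _), intervalIntegral.integral_const_mul] at h
  simp only [sin_zero, zero_pow (Nat.succ_ne_zero k), zero_mul, sub_zero] at h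
  change sin T ^ (k + 1) * (a - 2 * a) ≤ _ at h
  nlinarith [mul_nonneg hsinT (neg_nonneg.2 ha)]

theorem exists_mem_rayleighQuotients_le (k : ℕ) {T : ℝ} (hT1 : π / 2 ≤ T) (hT2 : T ≤ π) :
    ∃ q ∈ rayleighQuotients k T, q ≤ k + 1 := by
  have hpos := integral_sin_pow_mul_cos_sub_sq_pos k (by linarith [pi_pos]) hT2
  refine ⟨_, ⟨fun θ => cos θ - cos T, (contDiff_cos.sub contDiff_const).contDiffOn,
    sub_self _, hpos, rfl⟩, ?_⟩
  have hderiv : deriv (fun θ => cos θ - cos T) = fun θ => -sin θ := by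
    funext θ
    simp
  rw [div_le_iff₀ hpos, hderiv]
  simpa using integral_sin_pow_mul_sin_sq_le k hT1 hT2

/-- there exist `r̄ = r̄(N) > 0` and `C = C(N) > 0` such that
`N - 1 - Cr ≤ λ₁(ω_r) ≤ N - 1` for all `r ∈ (0, r̄)`. -/
theorem stmt9 (N : ℕ) (hN : 2 ≤ N) :
    ∃ rbar > (0:ℝ), ∃ C > (0:ℝ), ∀ r ∈ Set.Ioo (0:ℝ) rbar,
      (N:ℝ) - 1 - C * r ≤ capEig N r ∧ capEig N r ≤ (N:ℝ) - 1 := by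
  obtain ⟨k, rfl⟩ : ∃ k, N = k + 2 := ⟨N - 2, by omega⟩
  have hN1 : ((k + 2 : ℕ) : ℝ) - 1 = k + 1 := by push_cast; ring
  refine ⟨1, one_pos, ((k : ℝ) + 1) ^ 2, by positivity, fun r hr => ?_⟩
  rw [hN1, capEig_eq_sInf, Nat.add_sub_cancel]
  have hT1 : π / 2 ≤ arccos (-r / 2) :=
    (one_le_div pi_div_two_pos).1 (arccos_neg_div_two_div_mem hr.1.le (by linarith [hr.2])).1
  have hlow : ∀ q ∈ rayleighQuotients k (arccos (-r / 2)), (k + 1) - (k + 1) ^ 2 * r ≤ q :=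
    fun _ hq => le_of_mem_rayleighQuotients_cap k hr.1.le hr.2.le hq
  obtain ⟨q, hq, hq_le⟩ := exists_mem_rayleighQuotients_le k hT1 (arccos_le_pi _)
  exact ⟨le_csInf ⟨q, hq⟩ hlow, (csInf_le ⟨_, hlow⟩ hq).trans hq_le⟩
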